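/- Let F : ℝ → ℝ satisfy F(z) = F(c − z) for all z, and define stat(g) = Σ_{0 ≤ i < j < n} F(g_i − g_j) for g ∈ 𝒢^n. Then stat(C(g)) = stat(g) for every g ∈ 𝒢^n, where C(g_0,…,g_{n-1}) = (g_1,…,g_{n-1}, g_0 − c). Consequently, for all k ∈ {0,…,n−1}, the generating function Σ_{g k-skeletal} t^{stat(g)} equals Σ_{h (n−1)-skeletal} t^{stat(h)}. -/

import Mathlib

/-- Integer area vector. -/
def IsAreaVecZ {n : ℕ} (m : ℤ) (g : Fin (n + 1) → ℤ) : Prop :=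
  ∀ i : Fin n, g i.succ ≤ g i.castSucc + m

/-- Integer `k`-skeletal area vector. -/
def IsSkeletalZ {n : ℕ} (c m : ℤ) (k : ℕ) (g : Fin (n + 1) → ℤ) : Prop :=
  IsAreaVecZ m g ∧ g 0 ≤ c ∧
  (∀ i : Fin (n + 1), n - k ≤ (i : ℕ) → 0 < g i) ∧
  ¬ ∃ s : ℕ, s + k ≤ n ∧ ∀ j : Fin (n + 1), s ≤ (j : ℕ) → (j : ℕ) ≤ s + k → c < g j

/-- The cycling operator on integer vectors. -/
def cycZ {n : ℕ} (c : ℤ) (g : Fin (n + 1) → ℤ) : Fin (n + 1) → ℤ :=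
  fun i => if h : (i : ℕ) + 1 < n + 1 then g ⟨(i : ℕ) + 1, h⟩ else g 0 - c

/-- `stat(g) = Σ_{i < j} F(g_i - g_j)`. -/
noncomputable def statF {n : ℕ} (F : ℝ → ℝ) (g : Fin (n + 1) → ℤ) : ℝ :=
  ∑ p ∈ Finset.univ.filter (fun p : Fin (n + 1) × Fin (n + 1) => p.1 < p.2),
    F ((g p.1 : ℝ) - (g p.2 : ℝ))

/-! Extend `g` to the sequence `f : ℤ → ℤ` with `f (j + n + 1) = f j - c`. The iterates of
`cycZ c` and of its inverse on `g` are exactly the windows `(f t, …, f (t + n))`, and `cycZ c`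
preserves `stat` because `F (x - (y - c)) = F (y - x)`. For `k ≤ n`, the window at `t` is
`k`-skeletal iff `t + n - k` is the last start of a run of `k + 1` positive values of `f`;
as `c > 0` such runs exist and their starts are bounded above, so each orbit contains exactly one
`k`-skeletal vector, and passing to the `n`-skeletal vector of the same orbit is a
`stat`-preserving bijection. -/

namespace AreaVector

section PairSum

/-- `statF` for vectors of arbitrary length, so that it applies to `Fin.tail g`. -/
noncomputable def pairSum (F : ℝ → ℝ) {N : ℕ} (v : Fin N → ℤ) : ℝ :=
  ∑ i, ∑ j, if i < j then F ((v i : ℝ) - (v j : ℝ)) else 0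

variable (F : ℝ → ℝ) {N : ℕ}

theorem statF_eq_pairSum {n : ℕ} (g : Fin (n + 1) → ℤ) : statF F g = pairSum F g := by
  rw [statF, Finset.sum_filter, Fintype.sum_prod_type]
  rfl

theorem pairSum_cons (a : ℤ) (v : Fin N → ℤ) :
    pairSum F (Fin.cons a v : Fin (N + 1) → ℤ) = ∑ j, F ((a : ℝ) - (v j : ℝ)) + pairSum F v := by
  simp [pairSum, Fin.sum_univ_succ, Fin.succ_pos]

theorem pairSum_snoc (v : Fin N → ℤ) (b : ℤ) :
    pairSum F (Fin.snoc v b : Fin (N + 1) → ℤ) = pairSum F v + ∑ i, F ((v i : ℝ) - (b : ℝ)) := by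
  simp [pairSum, Fin.sum_univ_castSucc, Fin.castSucc_lt_last, Finset.sum_add_distrib,
    (Fin.castSucc_lt_last _).not_gt]

end PairSum

theorem cycZ_eq_snoc {n : ℕ} (c : ℤ) (g : Fin (n + 1) → ℤ) :
    cycZ c g = Fin.snoc (Fin.tail g) (g 0 - c) := by
  funext i
  induction i using Fin.lastCases with
  | last => simp [cycZ]
  | cast i => simp [cycZ, Fin.tail, Fin.succ]

theorem statF_cycZ {n : ℕ} {c : ℤ} {F : ℝ → ℝ} (hF : ∀ z : ℝ, F z = F ((c : ℝ) - z))
    (g : Fin (n + 1) → ℤ) : statF F (cycZ c g) = statF F g :=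
  calc statF F (cycZ c g) = pairSum F (Fin.snoc (Fin.tail g) (g 0 - c)) := by
        rw [statF_eq_pairSum, cycZ_eq_snoc]
    _ = pairSum F (Fin.tail g) + ∑ i, F ((g 0 : ℝ) - (Fin.tail g i : ℝ)) := by
        rw [pairSum_snoc]
        congr 1
        refine Finset.sum_congr rfl fun i _ => ?_
        rw [hF]
        congr 1
        push_cast
        ring
    _ = pairSum F (Fin.cons (g 0) (Fin.tail g)) := by rw [pairSum_cons, add_comm]
    _ = statF F g := by rw [Fin.cons_self_tail, statF_eq_pairSum]

theorem exists_fin_eq_add_mul (n : ℕ) (j : ℤ) :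
    ∃ (i : Fin (n + 1)) (q : ℤ), j = i + (n + 1) * q := by
  have h0 := Int.emod_nonneg j (by omega : (n + 1 : ℤ) ≠ 0)
  have h1 := Int.emod_lt_of_pos j (by omega : (0 : ℤ) < n + 1)
  refine ⟨⟨(j % (n + 1)).toNat, by omega⟩, j / (n + 1), ?_⟩
  have := Int.emod_add_mul_ediv j (n + 1)
  simp only [Int.toNat_of_nonneg h0]
  omega

def IsQuasiPeriodic (n : ℕ) (c : ℤ) (f : ℤ → ℤ) : Prop :=
  ∀ j, f (j + (n + 1)) = f j - c

namespace IsQuasiPeriodic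

variable {n : ℕ} {c : ℤ} {f : ℤ → ℤ}

theorem add_mul (hf : IsQuasiPeriodic n c f) (j q : ℤ) : f (j + (n + 1) * q) = f j - q * c := by
  induction q using Int.induction_on with
  | zero => simp
  | succ q ih => rw [mul_add_one, ← add_assoc, hf, ih]; ring
  | pred q ih =>
    have h := hf (j + (n + 1) * (-q - 1))
    rw [add_assoc, ← mul_add_one, sub_add_cancel, ih] at h
    linarith

theorem comp_add (hf : IsQuasiPeriodic n c f) (t : ℤ) : IsQuasiPeriodic n c (fun j => f (t + j)) :=
  fun j => by simpa only [add_assoc] using hf (t + j)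

theorem ext {f' : ℤ → ℤ} (hf : IsQuasiPeriodic n c f) (hf' : IsQuasiPeriodic n c f')
    (h : ∀ i : Fin (n + 1), f i = f' i) : f = f' := by
  funext j
  obtain ⟨i, q, rfl⟩ := exists_fin_eq_add_mul n j
  rw [hf.add_mul, hf'.add_mul, h]

end IsQuasiPeriodic

def window (n : ℕ) (f : ℤ → ℤ) (t : ℤ) : Fin (n + 1) → ℤ := fun i => f (t + i)

def extendZ (n : ℕ) (c : ℤ) (g : Fin (n + 1) → ℤ) (j : ℤ) : ℤ :=
  g (Fin.ofNat (n + 1) (j % (n + 1)).toNat) - j / (n + 1) * c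

section Extend

variable {n : ℕ} {c : ℤ}

theorem extendZ_add_mul (g : Fin (n + 1) → ℤ) (i : Fin (n + 1)) (q : ℤ) :
    extendZ n c g (i + (n + 1) * q) = g i - q * c := by
  have hi : (i : ℤ) < n + 1 := by have := i.isLt; omega
  have hmod : ((i : ℤ) + (n + 1) * q) % (n + 1) = i := by
    rw [Int.add_mul_emod_self_left, Int.emod_eq_of_lt (by omega) hi]
  have hdiv : ((i : ℤ) + (n + 1) * q) / (n + 1) = q := by
    rw [Int.add_mul_ediv_left _ _ (by omega), Int.ediv_eq_zero_of_lt (by omega) hi, zero_add]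
  simp [extendZ, hmod, hdiv]

theorem extendZ_val (g : Fin (n + 1) → ℤ) (i : Fin (n + 1)) : extendZ n c g i = g i := by
  simpa using extendZ_add_mul (c := c) g i 0

theorem isQuasiPeriodic_extendZ (g : Fin (n + 1) → ℤ) : IsQuasiPeriodic n c (extendZ n c g) := by
  intro j
  obtain ⟨i, q, rfl⟩ := exists_fin_eq_add_mul n j
  rw [add_assoc, ← mul_add_one, extendZ_add_mul, extendZ_add_mul]
  ring

theorem window_extendZ_zero (g : Fin (n + 1) → ℤ) : window n (extendZ n c g) 0 = g := by
  funext i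
  simp [window, extendZ_val]

theorem extendZ_window {f : ℤ → ℤ} (hf : IsQuasiPeriodic n c f) (t : ℤ) :
    extendZ n c (window n f t) = fun j => f (t + j) :=
  (isQuasiPeriodic_extendZ _).ext (hf.comp_add t) fun i => extendZ_val _ i

theorem extendZ_succ_le {m : ℤ} {g : Fin (n + 1) → ℤ} (hg : IsAreaVecZ m g)
    (hwrap : g 0 - c ≤ g (Fin.last n) + m) (j : ℤ) :
    extendZ n c g (j + 1) ≤ extendZ n c g j + m := by
  have hf := isQuasiPeriodic_extendZ (c := c) g
  obtain ⟨i, q, rfl⟩ := exists_fin_eq_add_mul n j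
  rw [add_right_comm, hf.add_mul, hf.add_mul, sub_add_eq_add_sub, sub_le_sub_iff_right]
  induction i using Fin.lastCases with
  | last =>
    have h0 : extendZ n c g 0 = g 0 := by simpa using extendZ_val (c := c) g 0
    have h := hf 0
    rw [zero_add, h0] at h
    have hn := extendZ_val (c := c) g (Fin.last n)
    rw [Fin.val_last] at hn
    rw [Fin.val_last, h, hn]
    linarith
  | cast i =>
    rw [show ((i.castSucc : ℕ) : ℤ) + 1 = (i.succ : ℕ) by simp, extendZ_val, extendZ_val]
    exact hg i

theorem window_add_one {f : ℤ → ℤ} (hf : IsQuasiPeriodic n c f) (t : ℤ) :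
    window n f (t + 1) = cycZ c (window n f t) := by
  funext i
  induction i using Fin.lastCases with
  | last =>
    simp only [window, cycZ, Fin.val_last, lt_irrefl, dite_false, Fin.val_zero]
    rw [add_assoc, add_comm 1, hf, Nat.cast_zero, add_zero]
  | cast i =>
    simp [window, cycZ, add_assoc, add_comm 1 (i : ℤ)]

theorem statF_window {F : ℝ → ℝ} (hF : ∀ z : ℝ, F z = F ((c : ℝ) - z)) {f : ℤ → ℤ}
    (hf : IsQuasiPeriodic n c f) (t : ℤ) : statF F (window n f t) = statF F (window n f 0) := by
  induction t using Int.induction_on with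
  | zero => rfl
  | succ t ih => rw [window_add_one hf, statF_cycZ hF, ih]
  | pred t ih => rw [← ih, ← statF_cycZ hF, ← window_add_one hf, sub_add_cancel]

end Extend

def IsSkeletalAt (n : ℕ) (c : ℤ) (k : ℕ) (f : ℤ → ℤ) (t : ℤ) : Prop :=
  f t ≤ c ∧ (∀ i : ℕ, n - k ≤ i → i ≤ n → 0 < f (t + i)) ∧
    ∀ s : ℕ, s + k ≤ n → ∃ j : ℕ, s ≤ j ∧ j ≤ s + k ∧ f (t + j) ≤ c

def posRunStarts (k : ℕ) (f : ℤ → ℤ) : Set ℤ := {r | ∀ i : ℕ, i ≤ k → 0 < f (r + i)}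

section Skeletal

variable {n : ℕ} {c m : ℤ} {k : ℕ} {f : ℤ → ℤ} {t : ℤ}

theorem isSkeletalZ_window_iff :
    IsSkeletalZ c m k (window n f t) ↔ IsAreaVecZ m (window n f t) ∧ IsSkeletalAt n c k f t := by
  simp only [IsSkeletalZ, IsSkeletalAt, window, Fin.forall_iff, Fin.val_zero, Nat.cast_zero,
    add_zero, Nat.lt_succ_iff, not_exists, not_and, not_forall, not_lt, exists_prop]
  refine and_congr_right fun _ => and_congr_right fun _ =>
    and_congr ?_ (forall₂_congr fun s _ => ?_)
  · exact forall_congr' fun i => ⟨fun h hk hn => h hn hk, fun h hn hk => h hk hn⟩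
  · exact exists_congr fun j =>
      ⟨fun ⟨_, hs, hj, h⟩ => ⟨hs, hj, h⟩, fun ⟨hs, hj, h⟩ => ⟨by omega, hs, hj, h⟩⟩

theorem isAreaVecZ_window (h : ∀ j, f (j + 1) ≤ f j + m) : IsAreaVecZ m (window n f t) :=
  fun i => by simpa [window, add_assoc] using h (t + i)

/-- Every run of length `k + 1` starting in `[t + n + 1 - k, t + 2n + 1 - k]` contains
`t + n + 1` or a point `t + j + n + 1` with `f (t + j) ≤ c`, where `f` is `≤ 0`. -/
theorem IsSkeletalAt.exists_nonpos (hf : IsQuasiPeriodic n c f) (h : IsSkeletalAt n c k f t)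
    (r : Fin (n + 1)) : ∃ i : ℕ, i ≤ k ∧ f (t + n + 1 - k + r + i) ≤ 0 := by
  by_cases hr : (r : ℕ) ≤ k
  · refine ⟨k - r, by omega, ?_⟩
    rw [show t + n + 1 - k + r + ((k - r : ℕ) : ℤ) = t + (n + 1) by omega, hf]
    linarith [h.1]
  · obtain ⟨j, hsj, hjs, hj⟩ := h.2.2 (r - k) (by omega)
    refine ⟨j - (r - k), by omega, ?_⟩
    rw [show t + n + 1 - k + r + ((j - (r - k) : ℕ) : ℤ) = t + j + (n + 1) by omega, hf]
    linarith

theorem IsSkeletalAt.isGreatest (hf : IsQuasiPeriodic n c f) (hc : 0 ≤ c) (hk : k ≤ n)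
    (h : IsSkeletalAt n c k f t) : IsGreatest (posRunStarts k f) (t + n - k) := by
  refine ⟨fun i hi => ?_, fun r hr => ?_⟩
  · have := h.2.1 (n - k + i) (by omega) (by omega)
    rwa [show t + ((n - k + i : ℕ) : ℤ) = t + n - k + i by omega] at this
  · by_contra! hlt
    obtain ⟨r₀, q, hq⟩ := exists_fin_eq_add_mul n (r - (t + n + 1 - k))
    have hq0 : 0 ≤ q := by have := r₀.isLt; nlinarith
    obtain ⟨i, hi, hneg⟩ := h.exists_nonpos hf r₀
    have hpos := hr i hi
    rw [show r + i = t + n + 1 - k + r₀ + i + (n + 1) * q by linarith, hf.add_mul] at hpos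
    nlinarith

theorem IsSkeletalAt.of_isGreatest (hf : IsQuasiPeriodic n c f) (hk : k ≤ n)
    (h : IsGreatest (posRunStarts k f) (t + n - k)) : IsSkeletalAt n c k f t := by
  refine ⟨?_, fun i hi hin => ?_, fun s hs => ?_⟩
  · have hnot : ¬∀ i : ℕ, i ≤ k → 0 < f (t + n - k + 1 + i) := fun hmem => by
      linarith [h.2 hmem]
    push Not at hnot
    obtain ⟨i, hi, hneg⟩ := hnot
    obtain rfl : i = k := by
      by_contra hik
      rw [show t + n - k + 1 + (i : ℤ) = t + n - k + ((i + 1 : ℕ) : ℤ) by push_cast; ring] at hneg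
      linarith [h.1 (i + 1) (by omega)]
    rw [show t + n - i + 1 + i = t + (n + 1) by ring, hf] at hneg
    linarith
  · have := h.1 (i - (n - k)) (by omega)
    rwa [show t + n - k + ((i - (n - k) : ℕ) : ℤ) = t + i by omega] at this
  · by_contra! hall
    have hmem : t + n + 1 + s ∈ posRunStarts k f := fun i hi => by
      have := hall (s + i) (by omega) (by omega)
      rw [show t + n + 1 + s + i = t + ((s + i : ℕ) : ℤ) + (n + 1) by push_cast; ring, hf]
      linarith
    linarith [h.2 hmem]

theorem isSkeletalAt_iff_isGreatest (hf : IsQuasiPeriodic n c f) (hc : 0 ≤ c) (hk : k ≤ n) :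
    IsSkeletalAt n c k f t ↔ IsGreatest (posRunStarts k f) (t + n - k) :=
  ⟨IsSkeletalAt.isGreatest hf hc hk, IsSkeletalAt.of_isGreatest hf hk⟩

theorem IsQuasiPeriodic.bddAbove_setOf_pos (hf : IsQuasiPeriodic n c f) (hc : 0 < c) :
    BddAbove {r | 0 < f r} := by
  obtain ⟨M, hM⟩ := ((Set.finite_Iic n).image fun i : ℕ => f i).bddAbove
  refine ⟨(n + 1) * |M| + n, fun r hr => ?_⟩
  obtain ⟨i, q, rfl⟩ := exists_fin_eq_add_mul n r
  have hi : f i ≤ M := hM ⟨i, Nat.le_of_lt_succ i.isLt, rfl⟩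
  have hr : 0 < f i - q * c := by rw [← hf.add_mul]; exact hr
  have hq : q ≤ |M| := by
    rcases le_or_gt q 0 with hq | hq
    · exact hq.trans (abs_nonneg M)
    · nlinarith [le_abs_self M]
  have := i.isLt
  nlinarith

theorem IsQuasiPeriodic.posRunStarts_nonempty (hf : IsQuasiPeriodic n c f) (hc : 0 < c) (k : ℕ) :
    (posRunStarts k f).Nonempty := by
  have : ∀ᶠ q : ℤ in Filter.atTop, ∀ i ∈ Finset.range (k + 1), 0 < f (i + (n + 1) * -q) :=
    (Filter.eventually_all_finset _).2 fun i _ =>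
      ((Filter.eventually_gt_atTop (-f i)).and (Filter.eventually_ge_atTop 0)).mono
        fun q ⟨hq, hq0⟩ => by rw [hf.add_mul]; nlinarith
  obtain ⟨q, hq⟩ := this.exists
  exact ⟨(n + 1) * -q, fun i hi => by
    simpa only [add_comm] using hq i (Finset.mem_range_succ_iff.2 hi)⟩

theorem IsQuasiPeriodic.bddAbove_posRunStarts (hf : IsQuasiPeriodic n c f) (hc : 0 < c) (k : ℕ) :
    BddAbove (posRunStarts k f) :=
  (hf.bddAbove_setOf_pos hc).mono fun r hr => by simpa using hr 0 k.zero_le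

end Skeletal

noncomputable def skeletalShift (n k : ℕ) (f : ℤ → ℤ) : ℤ := sSup (posRunStarts k f) + k - n

section Shift

variable {n : ℕ} {c : ℤ} {k : ℕ} {f : ℤ → ℤ}

theorem isSkeletalAt_iff_eq_skeletalShift (hf : IsQuasiPeriodic n c f) (hc : 0 < c) (hk : k ≤ n)
    {t : ℤ} : IsSkeletalAt n c k f t ↔ t = skeletalShift n k f := by
  have hne := hf.posRunStarts_nonempty hc k
  have hbdd := hf.bddAbove_posRunStarts hc k
  rw [isSkeletalAt_iff_isGreatest hf hc.le hk, skeletalShift]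
  constructor
  · intro h
    rw [h.csSup_eq]
    ring
  · rintro rfl
    rw [add_sub_assoc, sub_add_sub_cancel, add_sub_cancel_right]
    exact ⟨Int.csSup_mem hne hbdd, fun _ => le_csSup hbdd⟩

theorem skeletalShift_comp_add (hf : IsQuasiPeriodic n c f) (hc : 0 < c) (hk : k ≤ n) (t : ℤ) :
    skeletalShift n k (fun j => f (t + j)) = skeletalShift n k f - t := by
  symm
  rw [← isSkeletalAt_iff_eq_skeletalShift (hf.comp_add t) hc hk]
  have h := (isSkeletalAt_iff_eq_skeletalShift hf hc hk).2 rfl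
  simpa only [IsSkeletalAt, ← add_assoc, add_sub_cancel] using h

end Shift

noncomputable def skeletalRep {n : ℕ} (c : ℤ) (k : ℕ) (g : Fin (n + 1) → ℤ) : Fin (n + 1) → ℤ :=
  window n (extendZ n c g) (skeletalShift n k (extendZ n c g))

section Rep

variable {n : ℕ} {c m : ℤ} {k : ℕ}

theorem skeletalRep_window {f : ℤ → ℤ} (hf : IsQuasiPeriodic n c f) (hc : 0 < c) (hk : k ≤ n)
    (t : ℤ) : skeletalRep c k (window n f t) = window n f (skeletalShift n k f) := by
  funext i
  simp only [skeletalRep, extendZ_window hf, skeletalShift_comp_add hf hc hk, window]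
  ring_nf

theorem skeletalRep_skeletalRep (hc : 0 < c) (hk : k ≤ n) (j : ℕ) (g : Fin (n + 1) → ℤ) :
    skeletalRep c k (skeletalRep c j g) = skeletalRep c k g :=
  skeletalRep_window (isQuasiPeriodic_extendZ g) hc hk _

theorem skeletalRep_eq_self (hc : 0 < c) (hk : k ≤ n) {g : Fin (n + 1) → ℤ}
    (hg : IsSkeletalZ c m k g) : skeletalRep c k g = g := by
  rw [← window_extendZ_zero (c := c) g, isSkeletalZ_window_iff,
    isSkeletalAt_iff_eq_skeletalShift (isQuasiPeriodic_extendZ g) hc hk] at hg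
  rw [skeletalRep, ← hg.2, window_extendZ_zero]

theorem isSkeletalZ_skeletalRep (hc : 0 < c) (hm : 0 ≤ m) (hk : k ≤ n) {j : ℕ}
    {g : Fin (n + 1) → ℤ} (hg : IsSkeletalZ c m j g) : IsSkeletalZ c m k (skeletalRep c k g) := by
  obtain ⟨harea, h0, hpos, -⟩ := hg
  have hlast : 0 < g (Fin.last n) := hpos _ (by simp)
  refine isSkeletalZ_window_iff.2 ⟨isAreaVecZ_window (extendZ_succ_le harea (by linarith)), ?_⟩
  exact (isSkeletalAt_iff_eq_skeletalShift (isQuasiPeriodic_extendZ g) hc hk).2 rfl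

theorem statF_skeletalRep {F : ℝ → ℝ} (hF : ∀ z : ℝ, F z = F ((c : ℝ) - z)) (k : ℕ)
    (g : Fin (n + 1) → ℤ) : statF F (skeletalRep c k g) = statF F g := by
  rw [skeletalRep, statF_window hF (isQuasiPeriodic_extendZ g), window_extendZ_zero]

end Rep

end AreaVector

open AreaVector

theorem stmt19_general (n : ℕ) (c m : ℕ) (hc : 0 < c)
    (F : ℝ → ℝ) (hF : ∀ z : ℝ, F z = F ((c : ℝ) - z)) :
    (∀ g : Fin (n + 1) → ℤ, statF F (cycZ (c : ℤ) g) = statF F g) ∧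
    (∀ k : ℕ, k ≤ n → ∀ r : ℝ,
      {g : Fin (n + 1) → ℤ | IsSkeletalZ (c : ℤ) (m : ℤ) k g ∧ statF F g = r}.ncard
        = {g : Fin (n + 1) → ℤ |
            IsSkeletalZ (c : ℤ) (m : ℤ) n g ∧ statF F g = r}.ncard) := by
  have hc' : (0 : ℤ) < c := by exact_mod_cast hc
  have hF' : ∀ z : ℝ, F z = F (((c : ℤ) : ℝ) - z) := by simpa using hF
  refine ⟨statF_cycZ hF', fun k hk r => Set.BijOn.ncard_eq (f := skeletalRep c n) ?_⟩
  refine Set.InvOn.bijOn (f' := skeletalRep c k) ⟨fun g hg => ?_, fun g hg => ?_⟩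
    (fun g hg => ⟨isSkeletalZ_skeletalRep hc' m.cast_nonneg le_rfl hg.1,
      (statF_skeletalRep hF' n g).trans hg.2⟩)
    (fun g hg => ⟨isSkeletalZ_skeletalRep hc' m.cast_nonneg hk hg.1,
      (statF_skeletalRep hF' k g).trans hg.2⟩)
  · rw [skeletalRep_skeletalRep hc' hk, skeletalRep_eq_self hc' hk hg.1]
  · rw [skeletalRep_skeletalRep hc' le_rfl, skeletalRep_eq_self hc' le_rfl hg.1]

/-- if `F(z) = F(c - z)` then `stat` is invariant under the cycling
operator, and hence for every `k` the distribution of `stat` on `k`-skeletal area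
vectors coincides with its distribution on `(n-1)`-skeletal (Dyck) area vectors,
i.e. the generating functions `Σ t^{stat}` agree. -/
theorem stmt19 (n : ℕ) (c m : ℕ) (hc : 0 < c) (hm : 0 < m)
    (F : ℝ → ℝ) (hF : ∀ z : ℝ, F z = F ((c : ℝ) - z)) :
    (∀ g : Fin (n + 1) → ℤ, statF F (cycZ (c : ℤ) g) = statF F g) ∧
    (∀ k : ℕ, k ≤ n → ∀ r : ℝ,
      {g : Fin (n + 1) → ℤ | IsSkeletalZ (c : ℤ) (m : ℤ) k g ∧ statF F g = r}.ncard
        = {g : Fin (n + 1) → ℤ |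
            IsSkeletalZ (c : ℤ) (m : ℤ) n g ∧ statF F g = r}.ncard) :=
  stmt19_general n c m hc F hF
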